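/- In the Lie algebra sl_2^Λ, the subspace R = Fz_0 ⊕ ⋯ ⊕ Fz_Λ equals the derived ideal's intersection with the radical; more concretely, R is a nilpotent ideal, and it is the unique maximal nilpotent ideal (the nil radical) of sl_2^Λ. -/

import Mathlib

/-- A presentation of the Lie algebra `sl₂^Λ` over `F`: a Lie algebra with a basis
`e, h, f` (the `Fin 3` part, `0 ↦ e`, `1 ↦ h`, `2 ↦ f`) and `z_0, …, z_Λ`, subject to the
relations `[h,e] = 2e`, `[h,f] = −2f`, `[e,f] = h`, `[z_j, z_{j'}] = 0`,
`[h,z_j] = (Λ−2j)z_j`, `[f,z_j] = z_{j+1}` (with `z_{Λ+1} := 0`) and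
`[e,z_j] = j(Λ−j+1)z_{j−1}`. -/
structure SL2Lam (F : Type) [Field F] (Λ : ℕ) where
  carrier : Type
  [lieRing : LieRing carrier]
  [lieAlgebra : LieAlgebra F carrier]
  basis : Module.Basis (Fin 3 ⊕ Fin (Λ + 1)) F carrier
  rel_he : ⁅basis (Sum.inl 1), basis (Sum.inl 0)⁆ = 2 • basis (Sum.inl 0)
  rel_hf : ⁅basis (Sum.inl 1), basis (Sum.inl 2)⁆ = -(2 • basis (Sum.inl 2))
  rel_ef : ⁅basis (Sum.inl 0), basis (Sum.inl 2)⁆ = basis (Sum.inl 1)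
  rel_zz : ∀ j j' : Fin (Λ + 1), ⁅basis (Sum.inr j), basis (Sum.inr j')⁆ = 0
  rel_hz : ∀ j : Fin (Λ + 1),
    ⁅basis (Sum.inl 1), basis (Sum.inr j)⁆ = ((Λ : ℤ) - 2 * (j : ℕ)) • basis (Sum.inr j)
  rel_fz : ∀ (j : ℕ) (hj : j < Λ),
    ⁅basis (Sum.inl 2), basis (Sum.inr ⟨j, by omega⟩)⁆ = basis (Sum.inr ⟨j + 1, by omega⟩)
  rel_fzTop : ⁅basis (Sum.inl 2), basis (Sum.inr ⟨Λ, by omega⟩)⁆ = 0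
  rel_ez : ∀ (j : ℕ) (hj : j ≤ Λ),
    ⁅basis (Sum.inl 0), basis (Sum.inr ⟨j, by omega⟩)⁆
      = (j * (Λ - j + 1)) • basis (Sum.inr ⟨j - 1, by omega⟩)

attribute [instance] SL2Lam.lieRing SL2Lam.lieAlgebra

/-!
Every bracket with a `z_j` lies in `R = span {z_j}`, so `R` is an abelian ideal and `L ⧸ R` is
spanned by the images `ē, h̄, f̄`, which bracket as in `sl₂`. If a nilpotent ideal `J` had an
element `y ∉ R`, then one of `y`, `⁅e, y⁆`, `⁅e, ⁅e, y⁆⁆` (chosen by the last nonzero coordinate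
of `ȳ`) is an element `u ∈ J` with `ū = a ē`, `a ≠ 0`. Then `x = ⁅f, u⁆ ∈ J` has `x̄ = -a h̄`, so
`⁅x̄, ū⁆ = -2a ū`: a nonzero eigenvalue of `ad x` modulo `R`, although `ad x` is nilpotent on `J`.
Hence `u ∈ R`, i.e. `ē = 0`, contradicting the linear independence of the basis.
-/

section General

variable {F L : Type*} [Field F] [LieRing L] [LieAlgebra F L]

theorem lie_mem_span_of_forall_basis_lie_mem {ι : Type*} (b : Module.Basis ι F L) {s : Set L}
    (hs : ∀ i, ∀ m ∈ s, ⁅b i, m⁆ ∈ Submodule.span F s) (x : L) {m : L}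
    (hm : m ∈ Submodule.span F s) : ⁅x, m⁆ ∈ Submodule.span F s := by
  have hx : x ∈ Submodule.span F (Set.range b) := by simp
  induction hx, hm using Submodule.span_induction₂ with
  | mem_mem _ m hx hm => obtain ⟨i, rfl⟩ := hx; exact hs i m hm
  | zero_left => simp
  | zero_right => simp
  | add_left _ _ _ _ _ _ h₁ h₂ => rw [add_lie]; exact add_mem h₁ h₂
  | add_right _ _ _ _ _ _ h₁ h₂ => rw [lie_add]; exact add_mem h₁ h₂
  | smul_left _ _ _ _ _ h => rw [smul_lie]; exact Submodule.smul_mem _ _ h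
  | smul_right _ _ _ _ _ h => rw [lie_smul]; exact Submodule.smul_mem _ _ h

theorem lie_eq_zero_of_mem_span {s : Set L} (hs : ∀ x ∈ s, ∀ y ∈ s, ⁅x, y⁆ = 0) {x y : L}
    (hx : x ∈ Submodule.span F s) (hy : y ∈ Submodule.span F s) : ⁅x, y⁆ = 0 := by
  induction hx, hy using Submodule.span_induction₂ with
  | mem_mem x y hx hy => exact hs x hx y hy
  | zero_left => simp
  | zero_right => simp
  | add_left _ _ _ _ _ _ h₁ h₂ => rw [add_lie, h₁, h₂, add_zero]
  | add_right _ _ _ _ _ _ h₁ h₂ => rw [lie_add, h₁, h₂, add_zero]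
  | smul_left _ _ _ _ _ h => rw [smul_lie, h, smul_zero]
  | smul_right _ _ _ _ _ h => rw [lie_smul, h, smul_zero]

theorem LieIdeal.mem_of_lie_mk_eq_smul_mk {I J : LieIdeal F L} [LieRing.IsNilpotent J]
    {x y : J} {c : F} (hc : c ≠ 0)
    (h : ⁅(LieSubmodule.Quotient.mk (x : L) : L ⧸ I), (LieSubmodule.Quotient.mk (y : L) : L ⧸ I)⁆
      = c • (LieSubmodule.Quotient.mk (y : L) : L ⧸ I)) :
    (y : L) ∈ I := by
  obtain ⟨k, hk⟩ := LieAlgebra.nilpotent_ad_of_nilpotent_algebra F J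
  have hpow : ∀ n : ℕ, (LieSubmodule.Quotient.mk (((LieAlgebra.ad F J x ^ n) y : J) : L) : L ⧸ I)
      = c ^ n • LieSubmodule.Quotient.mk (y : L) := by
    intro n
    induction n with
    | zero => simp
    | succ n ih =>
      rw [pow_succ', Module.End.mul_apply, LieAlgebra.ad_apply]
      change (LieSubmodule.Quotient.mk ⁅(x : L), _⁆ : L ⧸ I) = _
      rw [LieSubmodule.Quotient.mk_bracket, ih, lie_smul, h, smul_smul, pow_succ]
  have hzero : c ^ k • (LieSubmodule.Quotient.mk (y : L) : L ⧸ I) = 0 := by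
    rw [← hpow k, hk x]
    rfl
  rw [← LieSubmodule.Quotient.mk_eq_zero']
  exact (smul_eq_zero.1 hzero).resolve_left (pow_ne_zero k hc)

end General

namespace SL2Lam

variable {F : Type} [Field F] {Λ : ℕ} (P : SL2Lam F Λ)

noncomputable def e : P.carrier := P.basis (Sum.inl 0)

noncomputable def h : P.carrier := P.basis (Sum.inl 1)

noncomputable def f : P.carrier := P.basis (Sum.inl 2)

theorem lie_h_e : ⁅P.h, P.e⁆ = 2 • P.e := P.rel_he

theorem lie_e_h : ⁅P.e, P.h⁆ = -(2 • P.e) := by rw [← lie_skew, lie_h_e]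

theorem lie_e_f : ⁅P.e, P.f⁆ = P.h := P.rel_ef

theorem lie_f_e : ⁅P.f, P.e⁆ = -P.h := by rw [← lie_skew, lie_e_f]

theorem lie_basis_z_mem_span (i : Fin 3 ⊕ Fin (Λ + 1)) (j : Fin (Λ + 1)) :
    ⁅P.basis i, P.basis (Sum.inr j)⁆
      ∈ Submodule.span F (Set.range fun j : Fin (Λ + 1) => P.basis (Sum.inr j)) := by
  have hz (k : Fin (Λ + 1)) :
      P.basis (Sum.inr k) ∈ Submodule.span F (Set.range fun j => P.basis (Sum.inr j)) :=
    Submodule.subset_span ⟨k, rfl⟩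
  obtain ⟨j, hj⟩ := j
  rcases i with i | k
  · fin_cases i
    · rw [show (⟨0, _⟩ : Fin 3) = 0 from rfl, P.rel_ez j (by omega)]
      exact nsmul_mem (hz _) _
    · rw [show (⟨1, _⟩ : Fin 3) = 1 from rfl, P.rel_hz]
      exact zsmul_mem (hz _) _
    · rw [show (⟨2, _⟩ : Fin 3) = 2 from rfl]
      rcases (by omega : j < Λ ∨ j = Λ) with hj | rfl
      · rw [P.rel_fz j hj]
        exact hz _
      · rw [P.rel_fzTop]
        exact zero_mem _
  · rw [P.rel_zz]
    exact zero_mem _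

def zIdeal : LieIdeal F P.carrier where
  toSubmodule := Submodule.span F (Set.range fun j : Fin (Λ + 1) => P.basis (Sum.inr j))
  lie_mem {x _} hm := lie_mem_span_of_forall_basis_lie_mem P.basis
    (by rintro i _ ⟨j, rfl⟩; exact P.lie_basis_z_mem_span i j) x hm

instance : IsLieAbelian P.zIdeal where
  trivial x y := Subtype.ext <| lie_eq_zero_of_mem_span
    (by rintro _ ⟨j, rfl⟩ _ ⟨j', rfl⟩; exact P.rel_zz j j') x.2 y.2

abbrev proj : P.carrier →ₗ⁅F, P.carrier⁆ P.carrier ⧸ P.zIdeal := LieSubmodule.Quotient.mk' _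

theorem proj_lie (x y : P.carrier) : P.proj ⁅x, y⁆ = ⁅P.proj x, P.proj y⁆ := rfl

theorem proj_e_ne_zero : P.proj P.e ≠ 0 := by
  rw [Ne, LieSubmodule.Quotient.mk_eq_zero]
  change P.basis (Sum.inl 0) ∉ Submodule.span F (Set.range (P.basis ∘ Sum.inr))
  rw [Set.range_comp]
  exact P.basis.linearIndependent.notMem_span_image (by simp)

theorem exists_proj_eq (y : P.carrier) :
    ∃ a b c : F, P.proj y = a • P.proj P.e + b • P.proj P.h + c • P.proj P.f := by
  have hz (j : Fin (Λ + 1)) : P.proj (P.basis (Sum.inr j)) = 0 :=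
    (LieSubmodule.Quotient.mk_eq_zero _).2 (Submodule.subset_span ⟨j, rfl⟩)
  refine ⟨P.basis.repr y (Sum.inl 0), P.basis.repr y (Sum.inl 1), P.basis.repr y (Sum.inl 2), ?_⟩
  nth_rw 1 [← P.basis.sum_repr y]
  simp only [Fintype.sum_sum_type, map_add, map_sum, map_smul, Fin.sum_univ_three, hz, smul_zero,
    Finset.sum_const_zero, add_zero]
  rfl

theorem exists_mem_proj_eq_smul_e [CharZero F] {J : LieIdeal F P.carrier} {y : P.carrier}
    (hy : y ∈ J) (hyR : y ∉ P.zIdeal) :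
    ∃ u ∈ J, ∃ a : F, a ≠ 0 ∧ P.proj u = a • P.proj P.e := by
  obtain ⟨a, b, c, hyabc⟩ := P.exists_proj_eq y
  have hey : P.proj ⁅P.e, y⁆ = (-2 * b) • P.proj P.e + c • P.proj P.h := by
    rw [proj_lie, hyabc]
    simp only [lie_add, lie_smul, lie_self, ← proj_lie, lie_e_h, lie_e_f, map_neg, map_nsmul]
    module
  have heey : P.proj ⁅P.e, ⁅P.e, y⁆⁆ = (-2 * c) • P.proj P.e := by
    rw [proj_lie, hey]
    simp only [lie_add, lie_smul, lie_self, ← proj_lie, lie_e_h, map_neg, map_nsmul]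
    module
  by_cases hc : c = 0
  · by_cases hb : b = 0
    · have hya : P.proj y = a • P.proj P.e := by simpa [hb, hc] using hyabc
      refine ⟨y, hy, a, ?_, hya⟩
      rintro rfl
      exact hyR ((LieSubmodule.Quotient.mk_eq_zero _).1 (by simpa using hya))
    · exact ⟨_, J.lie_mem hy, -2 * b, by simp [hb], by simpa [hc] using hey⟩
  · exact ⟨_, J.lie_mem (J.lie_mem hy), -2 * c, by simp [hc], heey⟩

theorem le_zIdeal_of_isNilpotent [CharZero F] (J : LieIdeal F P.carrier)
    [LieRing.IsNilpotent J] : J ≤ P.zIdeal := by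
  intro y hy
  by_contra hyR
  obtain ⟨u, hu, a, ha, hua⟩ := P.exists_mem_proj_eq_smul_e hy hyR
  have hfu : P.proj ⁅P.f, u⁆ = (-a) • P.proj P.h := by
    rw [proj_lie, hua, lie_smul, ← proj_lie, lie_f_e, map_neg, smul_neg, neg_smul]
  have huR : u ∈ P.zIdeal := by
    refine LieIdeal.mem_of_lie_mk_eq_smul_mk (x := ⟨⁅P.f, u⁆, J.lie_mem hu⟩) (y := ⟨u, hu⟩)
      (c := -2 * a) (by simp [ha]) ?_
    change ⁅P.proj ⁅P.f, u⁆, P.proj u⁆ = (-2 * a) • P.proj u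
    rw [hfu, hua, smul_lie, lie_smul, ← proj_lie, lie_h_e, map_nsmul]
    module
  apply P.proj_e_ne_zero
  have hae : a • P.proj P.e = 0 := hua ▸ (LieSubmodule.Quotient.mk_eq_zero _).2 huR
  exact (smul_eq_zero.1 hae).resolve_left ha

end SL2Lam

theorem sl2Lam_nilradical_general
    (F : Type) [Field F] [CharZero F] (Λ : ℕ) (P : SL2Lam F Λ) :
    ∃ R : LieIdeal F P.carrier,
      (R : Submodule F P.carrier)
        = Submodule.span F (Set.range fun j : Fin (Λ + 1) => P.basis (Sum.inr j)) ∧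
      LieRing.IsNilpotent R ∧
      (∀ J : LieIdeal F P.carrier, LieRing.IsNilpotent J → J ≤ R) :=
  ⟨P.zIdeal, rfl, inferInstance, fun J _ => P.le_zIdeal_of_isNilpotent J⟩

/-- In `sl₂^Λ`, the subspace `R = Fz_0 ⊕ ⋯ ⊕ Fz_Λ` is a nilpotent ideal and
it is the unique maximal nilpotent ideal (the nil radical) of `sl₂^Λ`. -/
theorem sl2Lam_nilradical
    (F : Type) [Field F] [CharZero F] (Λ : ℕ) (hΛ : 1 ≤ Λ) (P : SL2Lam F Λ) :
    ∃ R : LieIdeal F P.carrier,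
      (R : Submodule F P.carrier)
        = Submodule.span F (Set.range fun j : Fin (Λ + 1) => P.basis (Sum.inr j)) ∧
      LieRing.IsNilpotent R ∧
      (∀ J : LieIdeal F P.carrier, LieRing.IsNilpotent J → J ≤ R) :=
  sl2Lam_nilradical_general F Λ P
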